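/- Let C be an n×n symmetric Kalmanson matrix and let I ⊆ {1,…,n} be a nonempty subset. Then the tour that visits the elements of I in increasing order of their indices has length less than or equal to the length of every tour on I; likewise the tour visiting the elements of I in decreasing order of their indices is optimal. -/

import Mathlib

/-- Length of a walk along a list of nodes (sum of consecutive edge costs). -/
def pathLen {α : Type*} (C : α → α → ℝ) : List α → ℝ
  | [] => 0
  | [_] => 0
  | a :: b :: t => C a b + pathLen C (b :: t)

/-- Length of the closed tour visiting the nodes of `l` in order and
returning from the last node to the first one. -/
def tourLen {α : Type*} (C : α → α → ℝ) (l : List α) : ℝ :=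
  pathLen C (l ++ l.take 1)

/-- `l` is a tour on the finite set `I`: an enumeration of the elements of `I`,
each appearing exactly once. -/
def IsTourOn {α : Type*} [DecidableEq α] (I : Finset α) (l : List α) : Prop :=
  l.Nodup ∧ l.toFinset = I

/-- Kalmanson conditions for a symmetric matrix indexed by `Fin n`. -/
def IsKalmanson {n : ℕ} (C : Fin n → Fin n → ℝ) : Prop :=
  ∀ i j k l : Fin n, i < j → j < k → k < l →
    C i j + C k l ≤ C i k + C j l ∧ C i l + C j k ≤ C i k + C j l

/-!
Induct on `I`, removing its smallest element `m`. A tour on `I` may be rotated to start at `m`;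
deleting `m` leaves a tour on `I \ {m}`, and the length drops by the cost of inserting `m`
between the two former neighbours `y` and `x` of `m`. In the increasing tour these neighbours are
the maximum and the minimum of `I \ {m}`, and the Kalmanson inequalities say precisely that this
is the cheapest place to insert `m` between two distinct elements. Reversal does not change the
length of a tour when `C` is symmetric.
-/

open List

section TourLength

variable {α : Type*} (C : α → α → ℝ)

/-- The change in tour length when `m` is inserted between the consecutive nodes `x` and `y`. -/
def insertionCost (m x y : α) : ℝ := C x m + C m y - C x y

lemma pathLen_cons_append_singleton (a : α) (t : List α) (y : α) :
    pathLen C (a :: t ++ [y]) = pathLen C (a :: t) + C ((a :: t).getLast (cons_ne_nil a t)) y := by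
  induction t generalizing a with
  | nil => simp [pathLen]
  | cons b t ih =>
    simp only [cons_append, pathLen] at ih ⊢
    rw [ih, getLast_cons (cons_ne_nil b t)]
    ring

lemma tourLen_cons (a : α) (t : List α) : tourLen C (a :: t) = pathLen C (a :: t ++ [a]) := rfl

lemma tourLen_rotate_one (l : List α) : tourLen C (l.rotate 1) = tourLen C l := by
  rcases l with _ | ⟨y, _ | ⟨a, t⟩⟩
  · rfl
  · simp
  · have hrot : (y :: a :: t).rotate 1 = a :: (t ++ [y]) := by simp
    rw [hrot, tourLen_cons, tourLen_cons, pathLen_cons_append_singleton]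
    simp [pathLen, add_comm]

lemma tourLen_rotate (l : List α) (k : ℕ) : tourLen C (l.rotate k) = tourLen C l := by
  induction k with
  | zero => rw [rotate_zero]
  | succ k ih => rw [← rotate_rotate, tourLen_rotate_one, ih]

lemma List.IsRotated.tourLen_eq {l l' : List α} (h : l ~r l') : tourLen C l = tourLen C l' := by
  obtain ⟨k, rfl⟩ := h
  exact (tourLen_rotate C l k).symm

lemma tourLen_cons_cons (m a : α) (t : List α) :
    tourLen C (m :: a :: t) =
      tourLen C (a :: t) + insertionCost C m ((a :: t).getLast (cons_ne_nil a t)) a := by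
  rw [tourLen_cons, tourLen_cons, pathLen_cons_append_singleton]
  simp only [cons_append, pathLen, insertionCost]
  rw [← cons_append, pathLen_cons_append_singleton, getLast_cons (cons_ne_nil a t)]
  ring

variable {C}

lemma pathLen_reverse (hsym : ∀ i j, C i j = C j i) (l : List α) :
    pathLen C l.reverse = pathLen C l := by
  induction l with
  | nil => rfl
  | cons a t ih =>
    rcases t with _ | ⟨b, t⟩
    · rfl
    · obtain ⟨c, r, hrev⟩ : ∃ c r, (b :: t).reverse = c :: r :=
        exists_cons_of_ne_nil (by simp)
      have hlast : (c :: r).getLast (cons_ne_nil c r) = b := by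
        simp only [← hrev, getLast_reverse, head_cons]
      rw [reverse_cons, hrev, pathLen_cons_append_singleton, hlast, ← hrev, ih, pathLen, hsym,
        add_comm]

lemma tourLen_reverse (hsym : ∀ i j, C i j = C j i) (l : List α) :
    tourLen C l.reverse = tourLen C l := by
  rcases l with _ | ⟨a, t⟩
  · rfl
  · have hrot : t.reverse ++ [a] ~r a :: t.reverse :=
      ⟨_, rotate_append_length_eq t.reverse [a]⟩
    rw [reverse_cons, hrot.tourLen_eq, tourLen_cons, tourLen_cons, ← pathLen_reverse hsym]
    simp

lemma insertionCost_comm (hsym : ∀ i j, C i j = C j i) (m x y : α) :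
    insertionCost C m x y = insertionCost C m y x := by
  simp only [insertionCost, hsym x y, hsym x m, hsym m y]
  ring

end TourLength

lemma IsTourOn.exists_isRotated_cons {α : Type*} [DecidableEq α] {s : Finset α} {m : α}
    {l : List α} (hl : IsTourOn (insert m s) l) (hm : m ∉ s) :
    ∃ t, IsTourOn s t ∧ l ~r m :: t := by
  obtain ⟨l₁, l₂, rfl⟩ := append_of_mem (by simp [← mem_toFinset, hl.2] : m ∈ l)
  have hrot : l₁ ++ m :: l₂ ~r m :: (l₂ ++ l₁) :=
    ⟨_, rotate_append_length_eq l₁ (m :: l₂)⟩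
  have hnd : (m :: (l₂ ++ l₁)).Nodup := hrot.perm.nodup_iff.1 hl.1
  have hfin : insert m (l₂ ++ l₁).toFinset = insert m s := by
    rw [← toFinset_cons, ← toFinset_eq_of_perm _ _ hrot.perm, hl.2]
  refine ⟨l₂ ++ l₁, ⟨hnd.of_cons, ?_⟩, hrot⟩
  rw [← Finset.erase_insert (mt mem_toFinset.1 (nodup_cons.1 hnd).1), hfin,
    Finset.erase_insert hm]

section Kalmanson

variable {n : ℕ} {C : Fin n → Fin n → ℝ}
  (hsym : ∀ i j, C i j = C j i) (hkal : IsKalmanson C)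
include hsym hkal

lemma insertionCost_antitone_left {m x y z : Fin n} (hmx : m < x) (hxy : x < y)
    (hyz : y ≤ z) :
    insertionCost C m z x ≤ insertionCost C m y x := by
  rcases hyz.eq_or_lt with rfl | hyz
  · exact le_rfl
  · have := (hkal m x y z hmx hxy hyz).2
    simp only [insertionCost]
    linarith [hsym z m, hsym y m, hsym z x, hsym y x]

lemma insertionCost_monotone_right {m w x y : Fin n} (hmw : m < w) (hwx : w ≤ x) (hxy : x < y) :
    insertionCost C m y w ≤ insertionCost C m y x := by
  rcases hwx.eq_or_lt with rfl | hwx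
  · exact le_rfl
  · have := (hkal m w x y hmw hwx hxy).1
    simp only [insertionCost]
    linarith [hsym y x, hsym y w]

lemma insertionCost_getLast_head_le {m f x y : Fin n} {r : List (Fin n)}
    (hsorted : (f :: r).Pairwise (· ≤ ·)) (hmf : m < f)
    (hx : x ∈ f :: r) (hy : y ∈ f :: r) (hxy : x ≠ y) :
    insertionCost C m ((f :: r).getLast (cons_ne_nil f r)) f ≤ insertionCost C m y x := by
  wlog hlt : x < y generalizing x y
  · rw [insertionCost_comm hsym m y x]
    exact this hy hx hxy.symm (lt_of_le_of_ne (not_lt.1 hlt) hxy.symm)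
  have hfx : f ≤ x := by
    rcases mem_cons.1 hx with rfl | hx
    · exact le_rfl
    · exact rel_of_pairwise_cons hsorted hx
  exact (insertionCost_antitone_left hsym hkal hmf (hfx.trans_lt hlt)
    (hsorted.rel_getLast hy)).trans (insertionCost_monotone_right hsym hkal hmf hfx hlt)

lemma tourLen_sort_le (s : Finset (Fin n)) (l : List (Fin n)) (hl : IsTourOn s l) :
    tourLen C (s.sort (· ≤ ·)) ≤ tourLen C l := by
  induction s using Finset.induction_on_min generalizing l with
  | empty => rw [(toFinset_eq_empty_iff l).1 hl.2, Finset.sort_empty]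
  | insert m s hlt ih =>
    have hms : m ∉ s := fun h => lt_irrefl m (hlt m h)
    obtain ⟨t, ht, hrot⟩ := hl.exists_isRotated_cons hms
    rw [Finset.sort_insert _ (fun b hb => (hlt b hb).le) hms, hrot.tourLen_eq]
    rcases t with _ | ⟨a, _ | ⟨b, r⟩⟩
    · rw [← ht.2, (toFinset_sort _ ht.1).2 (by simp)]
    · rw [← ht.2, (toFinset_sort _ ht.1).2 (by simp)]
    · have has : a ∈ s := by simp [← ht.2]
      obtain ⟨f, R, hS⟩ :=
        exists_cons_of_ne_nil (ne_nil_of_mem ((Finset.mem_sort (· ≤ ·)).2 has))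
      have hmem : ∀ x ∈ a :: b :: r, x ∈ f :: R := fun x hx => by
        rw [← hS, Finset.mem_sort, ← ht.2, mem_toFinset]; exact hx
      have hlast : (a :: b :: r).getLast (cons_ne_nil _ _) ∈ b :: r := by
        rw [getLast_cons (cons_ne_nil b r)]; exact getLast_mem _
      have hne : a ≠ (a :: b :: r).getLast (cons_ne_nil _ _) :=
        fun h => (nodup_cons.1 ht.1).1 (h ▸ hlast)
      have hmf : m < f := hlt f (by rw [← Finset.mem_sort (· ≤ ·), hS]; exact mem_cons_self)
      rw [hS, tourLen_cons_cons, tourLen_cons_cons]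
      exact add_le_add (hS ▸ ih _ ht) <| insertionCost_getLast_head_le hsym hkal
        (hS ▸ Finset.pairwise_sort _ _) hmf (hmem a mem_cons_self)
        (hmem _ (mem_cons_of_mem a hlast)) hne

end Kalmanson

theorem increasing_and_decreasing_tours_optimal_on_subsets_general
    {n : ℕ} (C : Fin n → Fin n → ℝ)
    (hsym : ∀ i j, C i j = C j i) (hkal : IsKalmanson C)
    (I : Finset (Fin n)) :
    ∀ l : List (Fin n), IsTourOn I l →
      tourLen C (I.sort (· ≤ ·)) ≤ tourLen C l ∧
      tourLen C ((I.sort (· ≤ ·)).reverse) ≤ tourLen C l := by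
  intro l hl
  have hsorted := tourLen_sort_le hsym hkal I l hl
  exact ⟨hsorted, (tourLen_reverse hsym _).trans_le hsorted⟩

theorem increasing_and_decreasing_tours_optimal_on_subsets
    {n : ℕ} (C : Fin n → Fin n → ℝ)
    (hsym : ∀ i j, C i j = C j i) (hkal : IsKalmanson C)
    (I : Finset (Fin n)) (hI : I.Nonempty) :
    ∀ l : List (Fin n), IsTourOn I l →
      tourLen C (I.sort (· ≤ ·)) ≤ tourLen C l ∧
      tourLen C ((I.sort (· ≤ ·)).reverse) ≤ tourLen C l :=
  increasing_and_decreasing_tours_optimal_on_subsets_general C hsym hkal I
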